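/- Let N = s·p^{n+1} with p an odd prime, gcd(s,p)=1, and 0 ≤ r ≤ n, and let L = ℚ(ζ_N), K = ℚ(ζ_N^{p^{n−r}}). For any x_0, …, x_{p^{n−r}−1} ∈ K, the element x = ∑_{k=0}^{p^{n−r}−1} x_k ζ_N^k satisfies Tr_{L/ℚ}(x·conj(x)) = p^{n−r} · ∑_{k=0}^{p^{n−r}−1} Tr_{K/ℚ}(x_k·conj(x_k)). -/

import Mathlib

open IntermediateField

/-!
Write `m = p^(n-r)`, so that `K = ℚ(ζ^m)`. Since `p` divides `N/m`, `φ(N) = m·φ(N/m)`, hence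
`[ℚ(ζ) : K] = m` and `1, ζ, …, ζ^(m-1)` is a `K`-basis of `ℚ(ζ)` with `ζ^m ∈ K`. For `m ∤ e`,
multiplication by `ζ^e` sends each basis vector to a `K`-multiple of a different one, so
`Tr_{ℚ(ζ)/K}(ζ^e) = 0`. As `conj ζ = ζ⁻¹`, only the diagonal terms of `x·conj x` survive:
`Tr_{ℚ(ζ)/K}(x·conj x) = m·∑ x_k·conj x_k`, and the trace is transitive in `ℚ ⊆ K ⊆ ℚ(ζ)`.
-/

namespace PowerBasis

variable {F E : Type*} [Field F] [Field E] [Algebra F E] (pb : PowerBasis F E) {c : F}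

theorem trace_gen_pow_eq_zero (hc : pb.gen ^ pb.dim = algebraMap F E c) {a : ℕ} (ha₀ : 0 < a)
    (ha : a < pb.dim) :
    Algebra.trace F E (pb.gen ^ a) = 0 := by
  have repr_gen_pow_ne (i j : Fin pb.dim) (hij : (j : ℕ) ≠ i) :
      pb.basis.repr (pb.gen ^ (j : ℕ)) i = 0 := by
    rw [← pb.basis_eq_pow, pb.basis.repr_self, Finsupp.single_eq_of_ne' (mt Fin.val_eq_of_eq hij)]
  rw [Algebra.trace_eq_matrix_trace pb.basis, Matrix.trace]
  refine Finset.sum_eq_zero fun i _ => ?_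
  rw [Matrix.diag_apply, Algebra.leftMulMatrix_eq_repr_mul, pb.basis_eq_pow, ← pow_add]
  rcases lt_or_ge (a + i) pb.dim with h | h
  · exact repr_gen_pow_ne i ⟨a + i, h⟩ (by simp; omega)
  · have hwrap : pb.gen ^ (a + i) = c • pb.gen ^ (a + i - pb.dim) := by
      rw [Algebra.smul_def, ← hc, ← pow_add, Nat.add_sub_cancel' h]
    rw [hwrap, map_smul, Finsupp.smul_apply,
      repr_gen_pow_ne i ⟨a + i - pb.dim, by omega⟩ (by simp; omega), smul_zero]

theorem trace_gen_zpow_eq_zero (hc : pb.gen ^ pb.dim = algebraMap F E c) (hgen : pb.gen ≠ 0)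
    {e : ℤ} (he : ¬ (pb.dim : ℤ) ∣ e) :
    Algebra.trace F E (pb.gen ^ e) = 0 := by
  have hdim : (0 : ℤ) < pb.dim := by exact_mod_cast pb.dim_pos
  obtain ⟨a, ha⟩ : ∃ a : ℕ, e % pb.dim = a :=
    Int.eq_ofNat_of_zero_le (Int.emod_nonneg _ hdim.ne')
  have ha₀ : 0 < a := by
    rw [Int.dvd_iff_emod_eq_zero, ha] at he; omega
  have ha_lt : a < pb.dim := by
    have := Int.emod_lt_of_pos e hdim; omega
  have hsplit : pb.gen ^ e = c ^ (e / pb.dim) • pb.gen ^ a := by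
    rw [Algebra.smul_def, map_zpow₀, ← hc, ← zpow_natCast, ← zpow_natCast, ← zpow_mul,
      ← zpow_add₀ hgen, ← ha, Int.mul_ediv_add_emod]
  rw [hsplit, map_smul, pb.trace_gen_pow_eq_zero hc ha₀ ha_lt, smul_zero]

theorem trace_gen_zpow_sub (hc : pb.gen ^ pb.dim = algebraMap F E c) (hgen : pb.gen ≠ 0)
    (i j : Fin pb.dim) :
    Algebra.trace F E (pb.gen ^ ((i : ℤ) - j)) = if i = j then (pb.dim : F) else 0 := by
  split_ifs with hij
  · rw [hij, sub_self, zpow_zero, ← map_one (algebraMap F E), Algebra.trace_algebraMap,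
      pb.finrank, nsmul_one]
  · refine pb.trace_gen_zpow_eq_zero hc hgen fun hdvd => hij (Fin.ext ?_)
    have := Int.eq_zero_of_abs_lt_dvd hdvd (by rw [abs_lt]; omega)
    omega

theorem trace_sum_smul_gen_pow_mul_sum_smul_gen_zpow_neg
    (hc : pb.gen ^ pb.dim = algebraMap F E c) (hgen : pb.gen ≠ 0) (x x' : Fin pb.dim → F) :
    Algebra.trace F E ((∑ i, x i • pb.gen ^ (i : ℕ)) * ∑ j, x' j • pb.gen ^ (-(j : ℤ))) =
      pb.dim * ∑ i, x i * x' i := by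
  have hterm (i j : Fin pb.dim) : x i • pb.gen ^ (i : ℕ) * x' j • pb.gen ^ (-(j : ℤ)) =
      (x i * x' j) • pb.gen ^ ((i : ℤ) - j) := by
    rw [smul_mul_smul_comm, ← zpow_natCast, ← zpow_add₀ hgen, sub_eq_add_neg]
  rw [Finset.sum_mul_sum, map_sum, Finset.mul_sum]
  refine Finset.sum_congr rfl fun i _ => ?_
  simp only [hterm, map_sum, map_smul, pb.trace_gen_zpow_sub hc hgen, smul_eq_mul, mul_ite,
    mul_zero, Finset.sum_ite_eq, Finset.mem_univ, if_true]
  ring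

end PowerBasis

theorem Nat.totient_prime_pow_mul_of_dvd {p M : ℕ} (hp : p.Prime) (h : p ∣ M) (k : ℕ) :
    (p ^ k * M).totient = p ^ k * M.totient := by
  induction k with
  | zero => simp
  | succ k ih =>
    rw [pow_succ', mul_assoc, totient_mul_of_prime_of_dvd hp (dvd_mul_of_dvd_right h _), ih,
      mul_assoc]

namespace IntermediateField

theorem restrictScalars_adjoin_pow_adjoin (F : Type*) [Field F] {E : Type*} [Field E]
    [Algebra F E] (α : E) (k : ℕ) : F⟮α ^ k⟯⟮α⟯.restrictScalars F = F⟮α⟯ := by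
  rw [adjoin_simple_adjoin_simple]
  refine le_antisymm (adjoin_le_iff.2 ?_) (adjoin_simple_le_iff.2 (subset_adjoin F _ (by simp)))
  rintro _ (rfl | rfl)
  · exact pow_mem (mem_adjoin_simple_self F α) k
  · exact mem_adjoin_simple_self F _

variable {F E : Type*} [Field F] [Field E] [Algebra F E]

theorem trace_adjoin_simple_sum_mul_sum_zpow_neg {α : E} (hα : IsIntegral F α) (hα₀ : α ≠ 0)
    {m : ℕ} (hm : Module.finrank F F⟮α⟯ = m) {c : F} (hc : α ^ m = algebraMap F E c)
    (x x' : Fin m → F) :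
    Algebra.trace F F⟮α⟯ ((∑ i, x i • AdjoinSimple.gen F α ^ (i : ℕ)) *
        ∑ j, x' j • AdjoinSimple.gen F α ^ (-(j : ℤ))) =
      m * ∑ i, x i * x' i := by
  let pb := adjoin.powerBasis hα
  obtain rfl : pb.dim = m := pb.finrank ▸ hm
  exact pb.trace_sum_smul_gen_pow_mul_sum_smul_gen_zpow_neg (c := c) (Subtype.ext hc)
    (fun h => hα₀ (congrArg Subtype.val h)) x x'

end IntermediateField

open Polynomial in
theorem IsPrimitiveRoot.finrank_adjoin_rat {E : Type*} [Field E] [CharZero E] {ζ : E} {N : ℕ}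
    [NeZero N] (hζ : IsPrimitiveRoot ζ N) : Module.finrank ℚ ℚ⟮ζ⟯ = N.totient := by
  rw [adjoin.finrank (hζ.isIntegral (NeZero.pos N)).tower_top,
    ← cyclotomic_eq_minpoly_rat hζ (NeZero.pos N), natDegree_cyclotomic]

theorem IsPrimitiveRoot.finrank_adjoin_pow_adjoin_mul_totient {E : Type*} [Field E] [CharZero E]
    {ζ : E} {N m : ℕ} [NeZero N] (hζ : IsPrimitiveRoot ζ N) (hm : m ∣ N) :
    Module.finrank ℚ⟮ζ ^ m⟯ ℚ⟮ζ ^ m⟯⟮ζ⟯ * (N / m).totient = N.totient := by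
  have : NeZero (N / m) := ⟨(Nat.div_pos (Nat.le_of_dvd (NeZero.pos N) hm)
    (Nat.pos_of_dvd_of_pos hm (NeZero.pos N))).ne'⟩
  have hζm : IsPrimitiveRoot (ζ ^ m) (N / m) :=
    hζ.pow (NeZero.pos N) (Nat.mul_div_cancel' hm).symm
  have hrank : Module.finrank ℚ ℚ⟮ζ ^ m⟯⟮ζ⟯ = N.totient := by
    rw [← hζ.finrank_adjoin_rat, ← restrictScalars_adjoin_pow_adjoin ℚ ζ m]
    rfl
  rw [← hrank, ← Module.finrank_mul_finrank ℚ ℚ⟮ζ ^ m⟯ ℚ⟮ζ ^ m⟯⟮ζ⟯, hζm.finrank_adjoin_rat,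
    mul_comm]

theorem IsPrimitiveRoot.trace_sum_mul_conj {ζ : ℂ} {N m : ℕ} [NeZero N]
    (hζ : IsPrimitiveRoot ζ N) {K : IntermediateField ℚ ℂ} (hK : K = ℚ⟮ζ ^ m⟯)
    (hdeg : Module.finrank K K⟮ζ⟯ = m) (x x' : Fin m → K)
    (hx' : ∀ k, (x' k : ℂ) = (starRingEnd ℂ) (x k : ℂ)) {L : IntermediateField ℚ ℂ}
    (hL : L = ℚ⟮ζ⟯) {y y' : L} (hy : (y : ℂ) = ∑ k, (x k : ℂ) * ζ ^ (k : ℕ))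
    (hy' : (y' : ℂ) = (starRingEnd ℂ) (y : ℂ)) :
    Algebra.trace ℚ L (y * y') = m * ∑ k, Algebra.trace ℚ K (x k * x' k) := by
  have hζint := hζ.isIntegral (NeZero.pos N)
  have : FiniteDimensional ℚ K := hK ▸ adjoin.finiteDimensional (hζint.tower_top.pow m)
  have : FiniteDimensional K K⟮ζ⟯ := adjoin.finiteDimensional hζint.tower_top
  have hconj (k : ℕ) : (starRingEnd ℂ) (ζ ^ k) = ζ ^ (-(k : ℤ)) := by
    rw [map_pow, ← Complex.inv_eq_conj (hζ.norm'_eq_one (NeZero.ne N)), zpow_neg, zpow_natCast,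
      inv_pow]
  -- `L` becomes `K⟮ζ⟯` with scalars restricted, which exposes the tower `ℚ ⊆ K ⊆ L`.
  obtain rfl : L = K⟮ζ⟯.restrictScalars ℚ := by
    rw [hL, hK]
    exact (restrictScalars_adjoin_pow_adjoin ℚ ζ m).symm
  let z : K⟮ζ⟯ := ∑ k, x k • AdjoinSimple.gen K ζ ^ (k : ℕ)
  let z' : K⟮ζ⟯ := ∑ k, x' k • AdjoinSimple.gen K ζ ^ (-(k : ℤ))
  have hz : y * y' = z * z' := Subtype.ext (by
    simp [z, z', hy', hy, hx', hconj, Algebra.smul_def])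
  have hrel := trace_adjoin_simple_sum_mul_sum_zpow_neg hζint.tower_top (hζ.ne_zero (NeZero.ne N))
    hdeg (c := ⟨ζ ^ m, hK ▸ mem_adjoin_simple_self ℚ _⟩) rfl x x'
  calc Algebra.trace ℚ (K⟮ζ⟯.restrictScalars ℚ) (y * y')
      = Algebra.trace ℚ K (Algebra.trace K K⟮ζ⟯ (z * z')) := by
        rw [Algebra.trace_trace]; exact congrArg _ hz
    _ = _ := by rw [hrel, ← nsmul_eq_mul, map_nsmul, map_sum, nsmul_eq_mul]

theorem stmt12_general (p s n r : ℕ) (hp : p.Prime) (hs : 0 < s)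
    (N : ℕ) (hN : N = s * p ^ (n + 1))
    (ζ : ℂ) (hζ : IsPrimitiveRoot ζ N)
    (L : IntermediateField ℚ ℂ) (hL : L = ℚ⟮ζ⟯)
    (K : IntermediateField ℚ ℂ) (hK : K = ℚ⟮ζ ^ (p ^ (n - r))⟯)
    (x : Fin (p ^ (n - r)) → K)
    (y : L) (hy : (y : ℂ) = ∑ k : Fin (p ^ (n - r)), (x k : ℂ) * ζ ^ (k : ℕ))
    (y' : L) (hy' : (y' : ℂ) = (starRingEnd ℂ) (y : ℂ))
    (x' : Fin (p ^ (n - r)) → K)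
    (hx' : ∀ k, (x' k : ℂ) = (starRingEnd ℂ) (x k : ℂ)) :
    Algebra.trace ℚ L (y * y')
      = (p ^ (n - r) : ℚ) * ∑ k : Fin (p ^ (n - r)), Algebra.trace ℚ K (x k * x' k) := by
  have hM : 0 < s * p ^ (n + 1 - (n - r)) := Nat.mul_pos hs (pow_pos hp.pos _)
  have hNM : N = p ^ (n - r) * (s * p ^ (n + 1 - (n - r))) := by
    rw [hN, mul_left_comm, ← pow_add, Nat.add_sub_cancel' (by omega)]
  have : NeZero N := ⟨hNM ▸ Nat.mul_ne_zero (pow_ne_zero _ hp.ne_zero) hM.ne'⟩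
  have hdeg : Module.finrank K K⟮ζ⟯ = p ^ (n - r) := by
    have h := hζ.finrank_adjoin_pow_adjoin_mul_totient (Dvd.intro _ hNM.symm)
    rw [← hK, hNM, Nat.mul_div_cancel_left _ (pow_pos hp.pos _),
      Nat.totient_prime_pow_mul_of_dvd hp
        (dvd_mul_of_dvd_right (dvd_pow_self p (by omega)) s)] at h
    exact Nat.eq_of_mul_eq_mul_right (Nat.totient_pos.2 hM) h
  rw [hζ.trace_sum_mul_conj hK hdeg x x' hx' hL hy hy', Nat.cast_pow]

/-- For N = s·p^{n+1} (p an odd prime, gcd(s,p)=1), 0 ≤ r ≤ n, L = ℚ(ζ_N),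
K = ℚ(ζ_N^{p^{n−r}}) and x_k ∈ K, the element x = ∑_k x_k ζ_N^k satisfies
Tr_{L/ℚ}(x·conj(x)) = p^{n−r} · ∑_k Tr_{K/ℚ}(x_k·conj(x_k)). -/
theorem stmt12 (p s n r : ℕ) (hp : p.Prime) (hpodd : Odd p) (hs : 0 < s)
    (hsp : Nat.Coprime s p) (hr : r ≤ n)
    (N : ℕ) (hN : N = s * p ^ (n + 1))
    (ζ : ℂ) (hζ : IsPrimitiveRoot ζ N)
    (L : IntermediateField ℚ ℂ) (hL : L = ℚ⟮ζ⟯)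
    (K : IntermediateField ℚ ℂ) (hK : K = ℚ⟮ζ ^ (p ^ (n - r))⟯)
    (x : Fin (p ^ (n - r)) → K)
    (y : L) (hy : (y : ℂ) = ∑ k : Fin (p ^ (n - r)), (x k : ℂ) * ζ ^ (k : ℕ))
    (y' : L) (hy' : (y' : ℂ) = (starRingEnd ℂ) (y : ℂ))
    (x' : Fin (p ^ (n - r)) → K)
    (hx' : ∀ k, (x' k : ℂ) = (starRingEnd ℂ) (x k : ℂ)) :
    Algebra.trace ℚ L (y * y')
      = (p ^ (n - r) : ℚ) * ∑ k : Fin (p ^ (n - r)), Algebra.trace ℚ K (x k * x' k) :=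
  stmt12_general p s n r hp hs N hN ζ hζ L hL K hK x y hy y' hy' x' hx'
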